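/- arXiv:2604.26484 — 2 statements merged into one kernel-verified Lean document; each statement's English description precedes it below -/
import Mathlib

section
/- Let X ∈ 𝓜 and Y ∈ 𝓕. Suppose: L > 0 satisfies ‖φ(A)‖ ≤ L‖A‖ for all A ∈ ℝ^{n×p}; δ > 0 satisfies ‖Xᵀφ(Z) + Zᵀφ(X)‖ ≥ δ‖Z‖ for all Z ∈ 𝓕; ‖Y − X‖ ≤ δ/(4L); and α_c ≥ 0 satisfies ‖D(C∘𝒜)(X + t(Y − X))[Z] − D(C∘𝒜)(X)[Z]‖ ≤ 2α_c L t ‖Z‖ ‖Y − X‖ for all t ∈ [0,1] and all Z ∈ 𝓕, where D(C∘𝒜)(W)[Z] denotes the Fréchet derivative of the composite C∘𝒜 at W in direction Z. Then ‖C(𝒜(Y))‖ ≤ (8 α_c L / δ²) ‖C(Y)‖². -/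
open Matrix

attribute [local instance] Matrix.frobeniusNormedAddCommGroup Matrix.frobeniusNormedSpace

/-- Frobenius inner product `⟨A, B⟩ = tr(AᵀB)`. -/
noncomputable def frobInner {n p : ℕ} (A B : Matrix (Fin n) (Fin p) ℝ) : ℝ :=
  (Aᵀ * B).trace

/-- The constraint map `C(X) = Xᵀ φ(X) − I_p`. -/
noncomputable def Cmap {n p : ℕ}
    (φ : Matrix (Fin n) (Fin p) ℝ →ₗ[ℝ] Matrix (Fin n) (Fin p) ℝ)
    (X : Matrix (Fin n) (Fin p) ℝ) : Matrix (Fin p) (Fin p) ℝ :=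
  Xᵀ * φ X - 1

/-- The constraint dissolving operator `𝒜(X) = (3/2)X − (1/2)X φ(X)ᵀ X`. -/
noncomputable def Amap {n p : ℕ}
    (φ : Matrix (Fin n) (Fin p) ℝ →ₗ[ℝ] Matrix (Fin n) (Fin p) ℝ)
    (X : Matrix (Fin n) (Fin p) ℝ) : Matrix (Fin n) (Fin p) ℝ :=
  (3/2 : ℝ) • X - (1/2 : ℝ) • (X * (φ X)ᵀ * X)

/-- `𝒢 = span{X₁ᵀ X₂ : X₁, X₂ ∈ 𝓕}`. -/
noncomputable def Gspan {n p : ℕ} (𝓕 : Submodule ℝ (Matrix (Fin n) (Fin p) ℝ)) :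
    Submodule ℝ (Matrix (Fin p) (Fin p) ℝ) :=
  Submodule.span ℝ {T | ∃ X₁ ∈ 𝓕, ∃ X₂ ∈ 𝓕, T = X₁ᵀ * X₂}

/-!
On `𝓜` the map `𝒜` fixes `X`, so `C ∘ 𝒜` vanishes at `X`; by Assumption 1 its derivative
there also vanishes in every direction `Z ∈ 𝓕`: `D𝒜(X)[Z] = Z - X T / 2` with
`T = φ(Z)ᵀX + φ(X)ᵀZ`, and `φ(X T) = φ(X) ψ(T) = φ(X) Tᵀ`, so `DC(X)[D𝒜(X)[Z]] = 0`.
The mean value inequality along the segment from `X` to `Y`, fed with the Lipschitz bound on the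
derivative, gives `‖C(𝒜(Y))‖ ≤ 2 α_c L ‖Y - X‖²`. Finally `‖Y - X‖ ≤ 2 ‖C(Y)‖ / δ`, because
`C(X + Z) = (Xᵀφ(Z) + Zᵀφ(X)) + Zᵀφ(Z)` and the quadratic term is at most `δ ‖Z‖ / 4`.
-/

section MatrixCalculus

variable {𝕜 : Type*} [RCLike 𝕜] {l m k : Type*} [Fintype l] [Fintype m] [Fintype k]
  {E : Type*} [NormedAddCommGroup E] [NormedSpace 𝕜 E]

theorem Matrix.isBoundedBilinearMap_mul :
    IsBoundedBilinearMap 𝕜 (fun x : Matrix l m 𝕜 × Matrix m k 𝕜 => x.1 * x.2) where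
  add_left := Matrix.add_mul
  smul_left c x y := Matrix.smul_mul c x y
  add_right := Matrix.mul_add
  smul_right c x y := Matrix.mul_smul x c y
  bound := ⟨1, one_pos, fun x y => by simpa using Matrix.frobenius_norm_mul x y⟩

@[fun_prop]
theorem Differentiable.matrix_mul {f : E → Matrix l m 𝕜} {g : E → Matrix m k 𝕜}
    (hf : Differentiable 𝕜 f) (hg : Differentiable 𝕜 g) :
    Differentiable 𝕜 fun x => f x * g x :=
  show Differentiable 𝕜 ((fun x : Matrix l m 𝕜 × Matrix m k 𝕜 => x.1 * x.2) ∘ fun x => (f x, g x))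
  from Matrix.isBoundedBilinearMap_mul.differentiable.comp (hf.prodMk hg)

@[fun_prop]
theorem Differentiable.matrix_transpose {f : E → Matrix l m 𝕜} (hf : Differentiable 𝕜 f) :
    Differentiable 𝕜 fun x => (f x)ᵀ :=
  (Matrix.transposeLinearEquiv l m 𝕜 𝕜).toContinuousLinearEquiv.differentiable.comp hf

theorem HasDerivAt.matrix_mul {f : 𝕜 → Matrix l m 𝕜} {g : 𝕜 → Matrix m k 𝕜}
    {f' : Matrix l m 𝕜} {g' : Matrix m k 𝕜} {t : 𝕜}
    (hf : HasDerivAt f f' t) (hg : HasDerivAt g g' t) :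
    HasDerivAt (fun s => f s * g s) (f' * g t + f t * g') t := by
  rw [add_comm]
  exact (Matrix.isBoundedBilinearMap_mul.hasFDerivAt (f t, g t)).comp_hasDerivAt t (hf.prodMk hg)

theorem HasDerivAt.matrix_transpose {f : 𝕜 → Matrix l m 𝕜} {f' : Matrix l m 𝕜} {t : 𝕜}
    (hf : HasDerivAt f f' t) : HasDerivAt (fun s => (f s)ᵀ) f'ᵀ t :=
  (Matrix.transposeLinearEquiv l m 𝕜 𝕜).toContinuousLinearEquiv.hasFDerivAt.comp_hasDerivAt t hf

end MatrixCalculus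

section Segment

variable {E F : Type*} [NormedAddCommGroup E] [NormedSpace ℝ E] [NormedAddCommGroup F]
  [NormedSpace ℝ F]

theorem LinearMap.hasDerivAt_comp [FiniteDimensional ℝ E] (φ : E →ₗ[ℝ] F) {U : ℝ → E} {U' : E}
    {t : ℝ} (hU : HasDerivAt U U' t) : HasDerivAt (fun s => φ (U s)) (φ U') t :=
  (LinearMap.toContinuousLinearMap φ).hasFDerivAt.comp_hasDerivAt t hU

theorem hasDerivAt_add_smul (x v : E) (t : ℝ) : HasDerivAt (fun s : ℝ => x + s • v) v t := by
  simpa using ((hasDerivAt_id t).smul_const v).const_add x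

theorem DifferentiableAt.hasDerivAt_comp_add_smul {f : E → F} {x v : E} {t : ℝ}
    (hf : DifferentiableAt ℝ f (x + t • v)) :
    HasDerivAt (fun s : ℝ => f (x + s • v)) (fderiv ℝ f (x + t • v) v) t :=
  hf.hasFDerivAt.comp_hasDerivAt t (hasDerivAt_add_smul x v t)

theorem norm_sub_sub_fderiv_le_of_norm_fderiv_sub_le {f : E → F} (hf : Differentiable ℝ f)
    {x v : E} {K : ℝ}
    (hK : ∀ t ∈ Set.Ico (0 : ℝ) 1, ‖fderiv ℝ f (x + t • v) v - fderiv ℝ f x v‖ ≤ K) :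
    ‖f (x + v) - f x - fderiv ℝ f x v‖ ≤ K := by
  have hg : ∀ t : ℝ, HasDerivAt (fun s : ℝ => f (x + s • v) - s • fderiv ℝ f x v)
      (fderiv ℝ f (x + t • v) v - fderiv ℝ f x v) t := by
    intro t
    have hlin := (hasDerivAt_id t).smul_const (fderiv ℝ f x v)
    rw [one_smul] at hlin
    exact (hf _).hasDerivAt_comp_add_smul.sub hlin
  simpa [sub_right_comm] using
    norm_image_sub_le_of_norm_deriv_le_segment_01' (fun t _ => (hg t).hasDerivWithinAt) hK

end Segment

section ConstraintMaps

variable {n p : ℕ} (φ : Matrix (Fin n) (Fin p) ℝ →ₗ[ℝ] Matrix (Fin n) (Fin p) ℝ)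

theorem differentiable_Cmap_comp_Amap : Differentiable ℝ fun W => Cmap φ (Amap φ W) := by
  have hφ : Differentiable ℝ φ := (LinearMap.toContinuousLinearMap φ).differentiable
  unfold Cmap Amap
  fun_prop

variable {U : ℝ → Matrix (Fin n) (Fin p) ℝ} {U' : Matrix (Fin n) (Fin p) ℝ} {t : ℝ}

theorem HasDerivAt.Amap (hU : HasDerivAt U U' t) :
    HasDerivAt (fun s => Amap φ (U s))
      ((3/2 : ℝ) • U' - (1/2 : ℝ) • ((U' * (φ (U t))ᵀ + U t * (φ U')ᵀ) * U t
        + U t * (φ (U t))ᵀ * U')) t := by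
  unfold _root_.Amap
  exact (hU.const_smul (3/2 : ℝ)).sub
    ((hU.matrix_mul (φ.hasDerivAt_comp hU).matrix_transpose).matrix_mul hU |>.const_smul (1/2 : ℝ))

theorem HasDerivAt.Cmap (hU : HasDerivAt U U' t) :
    HasDerivAt (fun s => Cmap φ (U s)) (U'ᵀ * φ (U t) + (U t)ᵀ * φ U') t := by
  unfold _root_.Cmap
  exact (hU.matrix_transpose.matrix_mul (φ.hasDerivAt_comp hU)).sub_const _

variable {φ} {X : Matrix (Fin n) (Fin p) ℝ}

theorem transpose_apply_mul_eq_one (hX1 : Xᵀ * φ X = 1) : (φ X)ᵀ * X = 1 := by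
  simpa [Matrix.transpose_mul] using congrArg Matrix.transpose hX1

theorem Amap_eq_self (hX1 : Xᵀ * φ X = 1) : Amap φ X = X := by
  rw [Amap, Matrix.mul_assoc, transpose_apply_mul_eq_one hX1, Matrix.mul_one]
  module

theorem Cmap_Amap_eq_zero (hX1 : Xᵀ * φ X = 1) : Cmap φ (Amap φ X) = 0 := by
  rw [Amap_eq_self hX1, Cmap, hX1, sub_self]

theorem Cmap_add (hX1 : Xᵀ * φ X = 1) (Z : Matrix (Fin n) (Fin p) ℝ) :
    Cmap φ (X + Z) = (Xᵀ * φ Z + Zᵀ * φ X) + Zᵀ * φ Z := by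
  rw [Cmap, map_add, Matrix.transpose_add, Matrix.add_mul, Matrix.mul_add, Matrix.mul_add, hX1]
  abel

variable {𝓕 : Submodule ℝ (Matrix (Fin n) (Fin p) ℝ)}
  {ψ : Matrix (Fin p) (Fin p) ℝ →ₗ[ℝ] Matrix (Fin p) (Fin p) ℝ} {Z : Matrix (Fin n) (Fin p) ℝ}

theorem polarization_of_map_transpose_mul_self (hψφ : ∀ X ∈ 𝓕, ψ ((φ X)ᵀ * X) = Xᵀ * φ X)
    (hX : X ∈ 𝓕) (hZ : Z ∈ 𝓕) :
    ψ ((φ Z)ᵀ * X + (φ X)ᵀ * Z) = Xᵀ * φ Z + Zᵀ * φ X := by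
  have hsum := hψφ (X + Z) (𝓕.add_mem hX hZ)
  simp only [map_add, Matrix.transpose_add, Matrix.add_mul, Matrix.mul_add,
    hψφ X hX, hψφ Z hZ] at hsum
  rw [map_add]
  linear_combination (norm := abel) hsum

theorem fderiv_Cmap_comp_Amap_eq_zero (hφ𝓕 : ∀ X ∈ 𝓕, φ X ∈ 𝓕)
    (hφψ : ∀ X ∈ 𝓕, ∀ T ∈ Gspan 𝓕, φ (X * T) = φ X * ψ T)
    (hψφ : ∀ X ∈ 𝓕, ψ ((φ X)ᵀ * X) = Xᵀ * φ X)
    (hX : X ∈ 𝓕) (hX1 : Xᵀ * φ X = 1) (hZ : Z ∈ 𝓕) :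
    fderiv ℝ (fun W => Cmap φ (Amap φ W)) X Z = 0 := by
  set T := (φ Z)ᵀ * X + (φ X)ᵀ * Z with hT
  have hTG : T ∈ Gspan 𝓕 :=
    add_mem (Submodule.subset_span ⟨φ Z, hφ𝓕 Z hZ, X, hX, rfl⟩)
      (Submodule.subset_span ⟨φ X, hφ𝓕 X hX, Z, hZ, rfl⟩)
  have hTt : Tᵀ = Xᵀ * φ Z + Zᵀ * φ X := by
    simp only [hT, Matrix.transpose_add, Matrix.transpose_mul, Matrix.transpose_transpose]
  have hA' : (3/2 : ℝ) • Z - (1/2 : ℝ) • ((Z * (φ X)ᵀ + X * (φ Z)ᵀ) * X + X * (φ X)ᵀ * Z)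
      = Z - (1/2 : ℝ) • (X * T) := by
    simp only [hT, Matrix.mul_add, Matrix.add_mul, Matrix.mul_assoc,
      transpose_apply_mul_eq_one hX1, Matrix.mul_one]
    module
  have hφA' : φ (Z - (1/2 : ℝ) • (X * T)) = φ Z - (1/2 : ℝ) • (φ X * Tᵀ) := by
    rw [map_sub, map_smul, hφψ X hX T hTG, hTt, polarization_of_map_transpose_mul_self hψφ hX hZ]
  have hcurve := ((hasDerivAt_add_smul X Z 0).Amap φ).Cmap φ
  simp only [zero_smul, add_zero, Amap_eq_self hX1, hA', hφA'] at hcurve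
  have hfderiv := (differentiable_Cmap_comp_Amap φ (X + (0 : ℝ) • Z)).hasDerivAt_comp_add_smul
  rw [zero_smul, add_zero] at hfderiv
  refine (hfderiv.unique hcurve).trans ?_
  simp only [Matrix.transpose_sub, Matrix.transpose_smul, Matrix.transpose_mul, Matrix.sub_mul,
    Matrix.mul_sub, Matrix.smul_mul, Matrix.mul_smul, Matrix.mul_assoc, hX1, Matrix.mul_one,
    ← Matrix.mul_assoc Xᵀ, Matrix.one_mul, hTt]
  module

variable {L δ : ℝ}

theorem norm_transpose_mul_apply_le (hL : ∀ A, ‖φ A‖ ≤ L * ‖A‖) :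
    ‖Zᵀ * φ Z‖ ≤ L * ‖Z‖ ^ 2 :=
  calc ‖Zᵀ * φ Z‖ ≤ ‖Zᵀ‖ * ‖φ Z‖ := Matrix.frobenius_norm_mul _ _
    _ ≤ ‖Z‖ * (L * ‖Z‖) := by
      rw [Matrix.frobenius_norm_transpose]
      exact mul_le_mul_of_nonneg_left (hL Z) (norm_nonneg Z)
    _ = L * ‖Z‖ ^ 2 := by ring

theorem norm_le_of_norm_Cmap_add (hX1 : Xᵀ * φ X = 1) (hL0 : 0 < L)
    (hL : ∀ A, ‖φ A‖ ≤ L * ‖A‖) (hδ0 : 0 < δ) (hδ : δ * ‖Z‖ ≤ ‖Xᵀ * φ Z + Zᵀ * φ X‖)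
    (hZ : ‖Z‖ ≤ δ / (4 * L)) :
    ‖Z‖ ≤ 2 / δ * ‖Cmap φ (X + Z)‖ := by
  have hLZ : L * ‖Z‖ ≤ δ / 4 :=
    calc L * ‖Z‖ ≤ L * (δ / (4 * L)) := mul_le_mul_of_nonneg_left hZ hL0.le
      _ = δ / 4 := by field_simp
  have hlin : ‖Xᵀ * φ Z + Zᵀ * φ X‖ ≤ ‖Cmap φ (X + Z)‖ + L * ‖Z‖ ^ 2 := by
    rw [← add_sub_cancel_right (Xᵀ * φ Z + Zᵀ * φ X) (Zᵀ * φ Z), ← Cmap_add hX1]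
    exact (norm_sub_le _ _).trans (by gcongr; exact norm_transpose_mul_apply_le hL)
  rw [div_mul_eq_mul_div, le_div_iff₀ hδ0]
  nlinarith [norm_nonneg Z]

end ConstraintMaps

theorem stmt_16_general {n p : ℕ}
    (φ : Matrix (Fin n) (Fin p) ℝ →ₗ[ℝ] Matrix (Fin n) (Fin p) ℝ)
    (𝓕 : Submodule ℝ (Matrix (Fin n) (Fin p) ℝ))
    (ψ : Matrix (Fin p) (Fin p) ℝ →ₗ[ℝ] Matrix (Fin p) (Fin p) ℝ)
    (hφ𝓕 : ∀ X ∈ 𝓕, φ X ∈ 𝓕)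
    (hφψ : ∀ X ∈ 𝓕, ∀ T ∈ Gspan 𝓕, φ (X * T) = φ X * ψ T)
    (hψφ : ∀ X ∈ 𝓕, ψ ((φ X)ᵀ * X) = Xᵀ * φ X)
    (X : Matrix (Fin n) (Fin p) ℝ) (hX : X ∈ 𝓕) (hX1 : Xᵀ * φ X = 1)
    (Y : Matrix (Fin n) (Fin p) ℝ) (hY : Y ∈ 𝓕)
    (L : ℝ) (hL0 : 0 < L)
    (hL : ∀ A : Matrix (Fin n) (Fin p) ℝ, ‖φ A‖ ≤ L * ‖A‖)
    (δ : ℝ) (hδ0 : 0 < δ)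
    (hδ : ∀ Z ∈ 𝓕, δ * ‖Z‖ ≤ ‖Xᵀ * φ Z + Zᵀ * φ X‖)
    (hYX : ‖Y - X‖ ≤ δ / (4 * L))
    (αc : ℝ) (hαc0 : 0 ≤ αc)
    (hlip : ∀ t ∈ Set.Icc (0 : ℝ) 1, ∀ Z ∈ 𝓕,
      ‖fderiv ℝ (fun W => Cmap φ (Amap φ W)) (X + t • (Y - X)) Z
        - fderiv ℝ (fun W => Cmap φ (Amap φ W)) X Z‖
        ≤ 2 * αc * L * t * ‖Z‖ * ‖Y - X‖) :
    ‖Cmap φ (Amap φ Y)‖ ≤ (8 * αc * L / δ ^ 2) * ‖Cmap φ Y‖ ^ 2 := by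
  set Z := Y - X
  have hZ : Z ∈ 𝓕 := 𝓕.sub_mem hY hX
  have hYZ : X + Z = Y := add_sub_cancel X Y
  have hlipZ : ∀ t ∈ Set.Ico (0 : ℝ) 1,
      ‖fderiv ℝ (fun W => Cmap φ (Amap φ W)) (X + t • Z) Z
        - fderiv ℝ (fun W => Cmap φ (Amap φ W)) X Z‖ ≤ 2 * αc * L * ‖Z‖ ^ 2 := fun t ht =>
    (hlip t ⟨ht.1, ht.2.le⟩ Z hZ).trans <| by
      have : 0 ≤ 2 * αc * L * ‖Z‖ ^ 2 := by positivity
      nlinarith [ht.2]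
  have hZC : ‖Z‖ ≤ 2 / δ * ‖Cmap φ Y‖ :=
    hYZ ▸ norm_le_of_norm_Cmap_add hX1 hL0 hL hδ0 (hδ Z hZ) hYX
  calc ‖Cmap φ (Amap φ Y)‖
    _ = ‖Cmap φ (Amap φ (X + Z)) - Cmap φ (Amap φ X)
            - fderiv ℝ (fun W => Cmap φ (Amap φ W)) X Z‖ := by
      rw [fderiv_Cmap_comp_Amap_eq_zero hφ𝓕 hφψ hψφ hX hX1 hZ, Cmap_Amap_eq_zero hX1, hYZ,
        sub_zero, sub_zero]
    _ ≤ 2 * αc * L * ‖Z‖ ^ 2 :=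
      norm_sub_sub_fderiv_le_of_norm_fderiv_sub_le (differentiable_Cmap_comp_Amap φ) hlipZ
    _ ≤ 2 * αc * L * (2 / δ * ‖Cmap φ Y‖) ^ 2 := by gcongr
    _ = (8 * αc * L / δ ^ 2) * ‖Cmap φ Y‖ ^ 2 := by ring

theorem stmt_16 {n p : ℕ} (hn : 0 < n) (hp : 0 < p)
    (φ : Matrix (Fin n) (Fin p) ℝ →ₗ[ℝ] Matrix (Fin n) (Fin p) ℝ)
    (𝓕 : Submodule ℝ (Matrix (Fin n) (Fin p) ℝ))
    (ψ : Matrix (Fin p) (Fin p) ℝ →ₗ[ℝ] Matrix (Fin p) (Fin p) ℝ)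
    (hφ𝓕 : ∀ X ∈ 𝓕, φ X ∈ 𝓕)
    (hXT : ∀ X ∈ 𝓕, ∀ T ∈ Gspan 𝓕, X * T ∈ 𝓕)
    (hφsa : ∀ A B : Matrix (Fin n) (Fin p) ℝ, frobInner (φ A) B = frobInner A (φ B))
    (hψG : ∀ T ∈ Gspan 𝓕, ψ T ∈ Gspan 𝓕)
    (hφψ : ∀ X ∈ 𝓕, ∀ T ∈ Gspan 𝓕, φ (X * T) = φ X * ψ T)
    (hψφ : ∀ X ∈ 𝓕, ψ ((φ X)ᵀ * X) = Xᵀ * φ X)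
    (X : Matrix (Fin n) (Fin p) ℝ) (hX : X ∈ 𝓕) (hX1 : Xᵀ * φ X = 1)
    (Y : Matrix (Fin n) (Fin p) ℝ) (hY : Y ∈ 𝓕)
    (L : ℝ) (hL0 : 0 < L)
    (hL : ∀ A : Matrix (Fin n) (Fin p) ℝ, ‖φ A‖ ≤ L * ‖A‖)
    (δ : ℝ) (hδ0 : 0 < δ)
    (hδ : ∀ Z ∈ 𝓕, δ * ‖Z‖ ≤ ‖Xᵀ * φ Z + Zᵀ * φ X‖)
    (hYX : ‖Y - X‖ ≤ δ / (4 * L))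
    (αc : ℝ) (hαc0 : 0 ≤ αc)
    (hlip : ∀ t ∈ Set.Icc (0 : ℝ) 1, ∀ Z ∈ 𝓕,
      ‖fderiv ℝ (fun W => Cmap φ (Amap φ W)) (X + t • (Y - X)) Z
        - fderiv ℝ (fun W => Cmap φ (Amap φ W)) X Z‖
        ≤ 2 * αc * L * t * ‖Z‖ * ‖Y - X‖) :
    ‖Cmap φ (Amap φ Y)‖ ≤ (8 * αc * L / δ ^ 2) * ‖Cmap φ Y‖ ^ 2 :=
  stmt_16_general φ 𝓕 ψ hφ𝓕 hφψ hψφ X hX hX1 Y hY L hL0 hL δ hδ0 hδ hYX αc hαc0 hlip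
end

section
/- Let f : ℝ^{n×p} → ℝ be differentiable, let β ∈ ℝ, and define h(Y) = f(𝒜(Y)) + (β/2)‖C(Y)‖². Let X ∈ 𝓕 and suppose the Frobenius gradient G := ∇f(𝒜(X)) belongs to 𝓕. Then h is differentiable at X and its Frobenius gradient is ∇h(X) = G((3/2)I_p − (1/2)Xᵀφ(X)) − (1/2)φ(X)(XᵀG + ψ(GᵀX)) + β φ(X)(φ(X)ᵀX + ψ(Xᵀφ(X)) − 2I_p); i.e. for every Z ∈ ℝ^{n×p}, the Fréchet derivative of h at X in direction Z equals the Frobenius inner product of this matrix with Z. -/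
/-!
By the chain rule, `Dh(X)[Z] = ⟨G, D𝒜(X)[Z]⟩ + β ⟨C(X), DC(X)[Z]⟩` with
`D𝒜(X)[Z] = (3/2)Z − (1/2)(Z φ(X)ᵀ X + X φ(Z)ᵀ X + X φ(X)ᵀ Z)` and `DC(X)[Z] = Zᵀ φ(X) + Xᵀ φ(Z)`.
Cyclicity of the trace moves `Z` out of every term. In the two terms where `Z` enters through `φ`,
self-adjointness of `φ` leaves `φ(X T)` with `T = Gᵀ X` resp. `T = Xᵀ φ(X)`; both lie in `𝒢`
because `G, X, φ(X) ∈ 𝓕`, so `φ(X T) = φ(X) ψ(T)`.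
-/

open Matrix

attribute [local instance] Matrix.frobeniusNormedAddCommGroup Matrix.frobeniusNormedSpace

namespace Matrix

variable {l m k : Type*} [Fintype l] [Fintype m] [Fintype k]

noncomputable def mulCLM : Matrix l m ℝ →L[ℝ] Matrix m k ℝ →L[ℝ] Matrix l k ℝ :=
  LinearMap.toContinuousLinearMap
    (LinearMap.toContinuousLinearMap.toLinearMap ∘ₗ mulLinearMap ℝ)

noncomputable def transposeCLM : Matrix l m ℝ →L[ℝ] Matrix m l ℝ :=
  LinearMap.toContinuousLinearMap (transposeLinearEquiv l m ℝ ℝ).toLinearMap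

noncomputable def traceCLM : Matrix m m ℝ →L[ℝ] ℝ :=
  LinearMap.toContinuousLinearMap (traceLinearMap m ℝ ℝ)

end Matrix

section FrobeniusInner

variable {a b c : ℕ}

lemma norm_sq_eq_frobInner (A : Matrix (Fin a) (Fin b) ℝ) : ‖A‖ ^ 2 = frobInner A A := by
  rw [frobInner, frobenius_norm_def, ← Real.sqrt_eq_rpow, Real.sq_sqrt (by positivity), trace,
    Finset.sum_comm]
  simp only [Real.rpow_two, Real.norm_eq_abs, sq, abs_mul_abs_self, diag_apply, mul_apply,
    transpose_apply]

lemma frobInner_comm (A B : Matrix (Fin a) (Fin b) ℝ) : frobInner A B = frobInner B A := by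
  rw [frobInner, frobInner, ← trace_transpose, transpose_mul, transpose_transpose]

lemma frobInner_transpose (A B : Matrix (Fin a) (Fin b) ℝ) : frobInner Aᵀ Bᵀ = frobInner A B := by
  rw [frobInner, frobInner, transpose_transpose, trace_mul_comm, ← trace_transpose, transpose_mul,
    transpose_transpose]

lemma frobInner_mul_right (A : Matrix (Fin a) (Fin b) ℝ) (B : Matrix (Fin a) (Fin c) ℝ)
    (T : Matrix (Fin c) (Fin b) ℝ) : frobInner A (B * T) = frobInner (A * Tᵀ) B := by
  rw [frobInner, frobInner, transpose_mul, transpose_transpose, ← Matrix.mul_assoc, trace_mul_cycle]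

lemma frobInner_mul_left (A : Matrix (Fin a) (Fin b) ℝ) (W : Matrix (Fin a) (Fin c) ℝ)
    (B : Matrix (Fin c) (Fin b) ℝ) : frobInner A (W * B) = frobInner (Wᵀ * A) B := by
  rw [frobInner, frobInner, transpose_mul, transpose_transpose, Matrix.mul_assoc]

@[simp] lemma frobInner_add_left (A B C : Matrix (Fin a) (Fin b) ℝ) :
    frobInner (A + B) C = frobInner A C + frobInner B C := by
  simp [frobInner, Matrix.add_mul]

@[simp] lemma frobInner_sub_left (A B C : Matrix (Fin a) (Fin b) ℝ) :
    frobInner (A - B) C = frobInner A C - frobInner B C := by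
  simp [frobInner, Matrix.sub_mul]

@[simp] lemma frobInner_smul_left (r : ℝ) (A C : Matrix (Fin a) (Fin b) ℝ) :
    frobInner (r • A) C = r * frobInner A C := by
  simp [frobInner]

@[simp] lemma frobInner_add_right (A B C : Matrix (Fin a) (Fin b) ℝ) :
    frobInner C (A + B) = frobInner C A + frobInner C B := by
  simp [frobInner, Matrix.mul_add]

@[simp] lemma frobInner_sub_right (A B C : Matrix (Fin a) (Fin b) ℝ) :
    frobInner C (A - B) = frobInner C A - frobInner C B := by
  simp [frobInner, Matrix.mul_sub]

@[simp] lemma frobInner_smul_right (r : ℝ) (A C : Matrix (Fin a) (Fin b) ℝ) :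
    frobInner C (r • A) = r * frobInner C A := by
  simp [frobInner]

end FrobeniusInner

section MatrixCalculus

variable {E : Type*} [NormedAddCommGroup E] [NormedSpace ℝ E] {l m k : Type*}
  [Fintype l] [Fintype m] [Fintype k] {x : E}

theorem HasFDerivAt.matrix_mul {g : E → Matrix l m ℝ} {h : E → Matrix m k ℝ}
    {g' : E →L[ℝ] Matrix l m ℝ} {h' : E →L[ℝ] Matrix m k ℝ}
    (hg : HasFDerivAt g g' x) (hh : HasFDerivAt h h' x) :
    HasFDerivAt (fun y => g y * h y)
      (mulCLM.precompR E (g x) h' + mulCLM.precompL E g' (h x)) x :=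
  mulCLM.hasFDerivAt_of_bilinear hg hh

theorem HasFDerivAt.matrix_transpose {g : E → Matrix l m ℝ} {g' : E →L[ℝ] Matrix l m ℝ}
    (hg : HasFDerivAt g g' x) : HasFDerivAt (fun y => (g y)ᵀ) (transposeCLM.comp g') x :=
  transposeCLM.hasFDerivAt.comp (g := transposeCLM) x hg

theorem HasFDerivAt.matrix_trace {g : E → Matrix m m ℝ} {g' : E →L[ℝ] Matrix m m ℝ}
    (hg : HasFDerivAt g g' x) : HasFDerivAt (fun y => (g y).trace) (traceCLM.comp g') x :=
  traceCLM.hasFDerivAt.comp (g := traceCLM) x hg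

theorem HasFDerivAt.exists_hasFDerivAt_norm_sq {a b : ℕ} {g : E → Matrix (Fin a) (Fin b) ℝ}
    {g' : E →L[ℝ] Matrix (Fin a) (Fin b) ℝ} (hg : HasFDerivAt g g' x) :
    ∃ D : E →L[ℝ] ℝ, HasFDerivAt (fun y => ‖g y‖ ^ 2) D x ∧
      ∀ z, D z = 2 * frobInner (g x) (g' z) := by
  simp only [norm_sq_eq_frobInner]
  refine ⟨_, (hg.matrix_transpose.matrix_mul hg).matrix_trace, fun z => ?_⟩
  -- `simp` cannot evaluate such derivatives: their types mix the Frobenius and the entrywise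
  -- topology on matrices, which agree only after unfolding, so `change` is used instead.
  change ((g x)ᵀ * g' z + (g' z)ᵀ * g x).trace = _
  rw [trace_add, ← frobInner, ← frobInner, frobInner_comm (g' z), two_mul]

end MatrixCalculus

section ConstraintDissolving

variable {n p : ℕ} (φ : Matrix (Fin n) (Fin p) ℝ →ₗ[ℝ] Matrix (Fin n) (Fin p) ℝ)
  (X : Matrix (Fin n) (Fin p) ℝ)

theorem exists_hasFDerivAt_Amap :
    ∃ A' : Matrix (Fin n) (Fin p) ℝ →L[ℝ] Matrix (Fin n) (Fin p) ℝ, HasFDerivAt (Amap φ) A' X ∧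
      ∀ Z, A' Z =
        (3/2 : ℝ) • Z - (1/2 : ℝ) • (Z * (φ X)ᵀ * X + X * (φ Z)ᵀ * X + X * (φ X)ᵀ * Z) := by
  have hφ : HasFDerivAt φ (LinearMap.toContinuousLinearMap φ) X :=
    (LinearMap.toContinuousLinearMap φ).hasFDerivAt
  have hid := hasFDerivAt_id (𝕜 := ℝ) X
  refine ⟨_, (hid.const_smul (3/2 : ℝ)).sub
    (((hid.matrix_mul hφ.matrix_transpose).matrix_mul hid).const_smul (1/2 : ℝ)), fun Z => ?_⟩
  change (3/2 : ℝ) • Z - (1/2 : ℝ) • (X * (φ X)ᵀ * Z + (X * (φ Z)ᵀ + Z * (φ X)ᵀ) * X) = _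
  rw [Matrix.add_mul]
  congr 2
  abel

theorem exists_hasFDerivAt_Cmap :
    ∃ C' : Matrix (Fin n) (Fin p) ℝ →L[ℝ] Matrix (Fin p) (Fin p) ℝ, HasFDerivAt (Cmap φ) C' X ∧
      ∀ Z, C' Z = Zᵀ * φ X + Xᵀ * φ Z := by
  have hφ : HasFDerivAt φ (LinearMap.toContinuousLinearMap φ) X :=
    (LinearMap.toContinuousLinearMap φ).hasFDerivAt
  exact ⟨_, ((hasFDerivAt_id (𝕜 := ℝ) X).matrix_transpose.matrix_mul hφ).sub_const 1,
    fun Z => add_comm _ _⟩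

theorem exists_hasFDerivAt_norm_sq_Cmap :
    ∃ N' : Matrix (Fin n) (Fin p) ℝ →L[ℝ] ℝ, HasFDerivAt (fun Y => ‖Cmap φ Y‖ ^ 2) N' X ∧
      ∀ Z, N' Z = 2 * frobInner (Cmap φ X) (Zᵀ * φ X + Xᵀ * φ Z) := by
  obtain ⟨C', hC', hC'_apply⟩ := exists_hasFDerivAt_Cmap φ X
  obtain ⟨N', hN', hN'_apply⟩ := hC'.exists_hasFDerivAt_norm_sq
  exact ⟨N', hN', fun Z =>
    (hN'_apply Z).trans (congrArg (fun M => 2 * frobInner (Cmap φ X) M) (hC'_apply Z))⟩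

theorem frobInner_Amap_differential
    (hφ : ∀ A B : Matrix (Fin n) (Fin p) ℝ, frobInner (φ A) B = frobInner A (φ B))
    {G : Matrix (Fin n) (Fin p) ℝ} {S : Matrix (Fin p) (Fin p) ℝ}
    (hS : φ (X * (Gᵀ * X)) = φ X * S) (Z : Matrix (Fin n) (Fin p) ℝ) :
    frobInner G ((3/2 : ℝ) • Z - (1/2 : ℝ) • (Z * (φ X)ᵀ * X + X * (φ Z)ᵀ * X + X * (φ X)ᵀ * Z)) =
      frobInner (G * ((3/2 : ℝ) • (1 : Matrix (Fin p) (Fin p) ℝ) - (1/2 : ℝ) • (Xᵀ * φ X))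
        - (1/2 : ℝ) • (φ X * (Xᵀ * G + S))) Z := by
  have h₁ : frobInner G (Z * (φ X)ᵀ * X) = frobInner (G * (Xᵀ * φ X)) Z := by
    rw [Matrix.mul_assoc, frobInner_mul_right, transpose_mul, transpose_transpose]
  have h₂ : frobInner G (X * (φ Z)ᵀ * X) = frobInner (φ X * S) Z := by
    rw [frobInner_mul_right, frobInner_mul_left, ← frobInner_transpose, transpose_transpose,
      transpose_mul, transpose_mul, transpose_transpose, ← hφ, Matrix.mul_assoc, hS]
  have h₃ : frobInner G (X * (φ X)ᵀ * Z) = frobInner (φ X * (Xᵀ * G)) Z := by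
    rw [frobInner_mul_left, transpose_mul, transpose_transpose, Matrix.mul_assoc]
  simp only [frobInner_add_left, frobInner_sub_left, frobInner_smul_left, frobInner_add_right,
    frobInner_sub_right, frobInner_smul_right, Matrix.mul_sub, Matrix.mul_add, Matrix.mul_smul,
    Matrix.mul_one, h₁, h₂, h₃]
  ring

theorem frobInner_Cmap_differential
    (hφ : ∀ A B : Matrix (Fin n) (Fin p) ℝ, frobInner (φ A) B = frobInner A (φ B))
    {S : Matrix (Fin p) (Fin p) ℝ} (hS : φ (X * (Xᵀ * φ X)) = φ X * S)
    (Z : Matrix (Fin n) (Fin p) ℝ) :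
    frobInner (Cmap φ X) (Zᵀ * φ X + Xᵀ * φ Z) = frobInner (φ X * ((φ X)ᵀ * X + S - 2)) Z := by
  have h₁ : frobInner (Cmap φ X) (Zᵀ * φ X) = frobInner (φ X * ((φ X)ᵀ * X - 1)) Z := by
    rw [frobInner_mul_right, ← frobInner_transpose, transpose_transpose, transpose_mul,
      transpose_transpose, Cmap, transpose_sub, transpose_mul, transpose_transpose, transpose_one]
  have h₂ : frobInner (Cmap φ X) (Xᵀ * φ Z) = frobInner (φ X * S - φ X) Z := by
    rw [frobInner_mul_left, transpose_transpose, ← hφ, Cmap, Matrix.mul_sub, Matrix.mul_one,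
      map_sub, hS]
  have h₃ : φ X * ((φ X)ᵀ * X + S - 2) = φ X * ((φ X)ᵀ * X - 1) + (φ X * S - φ X) := by
    rw [← one_add_one_eq_two]
    simp only [Matrix.mul_sub, Matrix.mul_add, Matrix.mul_one]
    abel
  rw [frobInner_add_right, h₁, h₂, h₃, frobInner_add_left]

end ConstraintDissolving

theorem stmt_17_general {n p : ℕ}
    (φ : Matrix (Fin n) (Fin p) ℝ →ₗ[ℝ] Matrix (Fin n) (Fin p) ℝ)
    (𝓕 : Submodule ℝ (Matrix (Fin n) (Fin p) ℝ))
    (ψ : Matrix (Fin p) (Fin p) ℝ →ₗ[ℝ] Matrix (Fin p) (Fin p) ℝ)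
    (hφ𝓕 : ∀ X ∈ 𝓕, φ X ∈ 𝓕)
    (hφsa : ∀ A B : Matrix (Fin n) (Fin p) ℝ, frobInner (φ A) B = frobInner A (φ B))
    (hφψ : ∀ X ∈ 𝓕, ∀ T ∈ Gspan 𝓕, φ (X * T) = φ X * ψ T)
    (f : Matrix (Fin n) (Fin p) ℝ → ℝ) (hf : Differentiable ℝ f)
    (β : ℝ)
    (X : Matrix (Fin n) (Fin p) ℝ) (hX : X ∈ 𝓕)
    (G : Matrix (Fin n) (Fin p) ℝ) (hG𝓕 : G ∈ 𝓕)
    (hG : ∀ Z : Matrix (Fin n) (Fin p) ℝ, fderiv ℝ f (Amap φ X) Z = frobInner G Z) :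
    ∃ D : Matrix (Fin n) (Fin p) ℝ →L[ℝ] ℝ,
      HasFDerivAt (fun Y => f (Amap φ Y) + (β / 2) * ‖Cmap φ Y‖ ^ 2) D X ∧
      ∀ Z : Matrix (Fin n) (Fin p) ℝ,
        D Z = frobInner
          (G * ((3/2 : ℝ) • (1 : Matrix (Fin p) (Fin p) ℝ) - (1/2 : ℝ) • (Xᵀ * φ X))
            - (1/2 : ℝ) • (φ X * (Xᵀ * G + ψ (Gᵀ * X)))
            + β • (φ X * ((φ X)ᵀ * X + ψ (Xᵀ * φ X) - 2))) Z := by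
  obtain ⟨A', hA', hA'_apply⟩ := exists_hasFDerivAt_Amap φ X
  obtain ⟨N', hN', hN'_apply⟩ := exists_hasFDerivAt_norm_sq_Cmap φ X
  refine ⟨_, ((hf _).hasFDerivAt.comp X hA').add (hN'.const_mul (β / 2)), fun Z => ?_⟩
  have hGX : Gᵀ * X ∈ Gspan 𝓕 := Submodule.subset_span ⟨G, hG𝓕, X, hX, rfl⟩
  have hXφX : Xᵀ * φ X ∈ Gspan 𝓕 := Submodule.subset_span ⟨X, hX, φ X, hφ𝓕 X hX, rfl⟩
  change fderiv ℝ f (Amap φ X) (A' Z) + β / 2 * N' Z = _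
  rw [hA'_apply, hG, hN'_apply, frobInner_Amap_differential φ X hφsa (hφψ X hX _ hGX),
    frobInner_Cmap_differential φ X hφsa (hφψ X hX _ hXφX), frobInner_add_left,
    frobInner_smul_left]
  ring

theorem stmt_17 {n p : ℕ} (hn : 0 < n) (hp : 0 < p)
    (φ : Matrix (Fin n) (Fin p) ℝ →ₗ[ℝ] Matrix (Fin n) (Fin p) ℝ)
    (𝓕 : Submodule ℝ (Matrix (Fin n) (Fin p) ℝ))
    (ψ : Matrix (Fin p) (Fin p) ℝ →ₗ[ℝ] Matrix (Fin p) (Fin p) ℝ)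
    (hφ𝓕 : ∀ X ∈ 𝓕, φ X ∈ 𝓕)
    (hXT : ∀ X ∈ 𝓕, ∀ T ∈ Gspan 𝓕, X * T ∈ 𝓕)
    (hφsa : ∀ A B : Matrix (Fin n) (Fin p) ℝ, frobInner (φ A) B = frobInner A (φ B))
    (hψG : ∀ T ∈ Gspan 𝓕, ψ T ∈ Gspan 𝓕)
    (hφψ : ∀ X ∈ 𝓕, ∀ T ∈ Gspan 𝓕, φ (X * T) = φ X * ψ T)
    (hψφ : ∀ X ∈ 𝓕, ψ ((φ X)ᵀ * X) = Xᵀ * φ X)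
    (f : Matrix (Fin n) (Fin p) ℝ → ℝ) (hf : Differentiable ℝ f)
    (β : ℝ)
    (X : Matrix (Fin n) (Fin p) ℝ) (hX : X ∈ 𝓕)
    (G : Matrix (Fin n) (Fin p) ℝ) (hG𝓕 : G ∈ 𝓕)
    (hG : ∀ Z : Matrix (Fin n) (Fin p) ℝ, fderiv ℝ f (Amap φ X) Z = frobInner G Z) :
    ∃ D : Matrix (Fin n) (Fin p) ℝ →L[ℝ] ℝ,
      HasFDerivAt (fun Y => f (Amap φ Y) + (β / 2) * ‖Cmap φ Y‖ ^ 2) D X ∧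
      ∀ Z : Matrix (Fin n) (Fin p) ℝ,
        D Z = frobInner
          (G * ((3/2 : ℝ) • (1 : Matrix (Fin p) (Fin p) ℝ) - (1/2 : ℝ) • (Xᵀ * φ X))
            - (1/2 : ℝ) • (φ X * (Xᵀ * G + ψ (Gᵀ * X)))
            + β • (φ X * ((φ X)ᵀ * X + ψ (Xᵀ * φ X) - 2))) Z :=
  stmt_17_general φ 𝓕 ψ hφ𝓕 hφsa hφψ f hf β X hX G hG𝓕 hG
end
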